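/- arXiv:2306.12506 — 3 statements merged into one kernel-verified Lean document; each statement's English description precedes it below -/
import Mathlib

section
/- Let κ →^c λ →^d ν be skew-column steps of r-row generalized partitions and set μ := sort(ν + κ − λ). Then there exist unique nonnegative integers m_1, …, m_{r−1} such that (ν − μ) = (λ − κ) + Σ_{i=1}^{r−1} m_i (e_{i+1} − e_i). Equivalently, for every 1 ≤ i ≤ r−1 the partial sum Σ_{j=1}^{i} ((λ−κ)_j − (ν−μ)_j) is nonnegative, and these partial sums are the m_i. -/
open scoped Classical

noncomputable section

namespace FT

/-- A (raw) `r`-row integer vector; generalized partitions are the antitone ones. -/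
abbrev GP (r : ℕ) := Fin r → ℤ

/-- The weakly decreasing rearrangement of a tuple. -/
def sortDesc {r : ℕ} (α : GP r) : GP r := fun i => (α ∘ Tuple.sort α) i.rev

/-- Standard basis vector (0-indexed). -/
def eV {r : ℕ} (a : Fin r) : GP r := fun i => if i = a then 1 else 0

/-- Standard basis vector with 1-indexed row `a` (zero if out of range). -/
def eN (r : ℕ) (a : ℕ) : GP r := fun i => if (i : ℕ) + 1 = a then 1 else 0

/-- Indicator vector of a set of rows. -/
def indV {r : ℕ} (S : Finset (Fin r)) : GP r := fun i => if i ∈ S then 1 else 0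

/-- `colStep r c μ λ`: `λ` is obtained from `μ` by adding (if `c ≥ 0`) or removing
(if `c ≤ 0`) a skew column of `|c|` boxes. -/
def colStep (r : ℕ) (c : ℤ) (μ lam : GP r) : Prop :=
  ∃ S : Finset (Fin r), S.card = c.natAbs ∧
    (if 0 ≤ c then lam = μ + indV S else lam = μ - indV S)

/-- Skew fluctuating tableau of length `n` and type `c` (recorded at indices `0,…,n`;
values of `T` and `c` beyond those indices are irrelevant). -/
def IsSkewFT (r n : ℕ) (T : ℕ → GP r) (c : ℕ → ℤ) : Prop :=
  (∀ k ≤ n, Antitone (T k)) ∧ ∀ j < n, colStep r (c j) (T j) (T (j + 1))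

/-- (Non-skew) fluctuating tableau: starts at the empty shape. -/
def IsFT (r n : ℕ) (T : ℕ → GP r) (c : ℕ → ℤ) : Prop :=
  IsSkewFT r n T c ∧ T 0 = 0

/-- Rectangular: the final shape is constant. -/
def Rect (r n : ℕ) (T : ℕ → GP r) : Prop := ∃ m : ℤ, ∀ i, T n i = m

/-- Bender–Knuth involution `BK_i` (for `1 ≤ i ≤ n-1`). -/
def BK {r : ℕ} (i : ℕ) (T : ℕ → GP r) : ℕ → GP r :=
  fun k => if k = i then sortDesc (T (i + 1) + T (i - 1) - T i) else T k

/-- `BKseg a m = BK (a+m-1) ∘ ⋯ ∘ BK a` (apply `BK a` first). -/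
def BKseg {r : ℕ} (a : ℕ) : ℕ → (ℕ → GP r) → ℕ → GP r
  | 0 => id
  | m + 1 => BK (a + m) ∘ BKseg a m

/-- Promotion `P = BK_{n-1} ∘ ⋯ ∘ BK_1` on length-`n` tableaux. -/
def promo {r : ℕ} (n : ℕ) (T : ℕ → GP r) : ℕ → GP r := BKseg 1 (n - 1) T

/-- `BKsegRev a m = BK a ∘ ⋯ ∘ BK (a+m-1)` (apply `BK (a+m-1)` first). -/
def BKsegRev {r : ℕ} (a : ℕ) : ℕ → (ℕ → GP r) → ℕ → GP r
  | 0 => id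
  | m + 1 => BKsegRev a m ∘ BK (a + m)

/-- Inverse of promotion: `P⁻¹ = BK_1 ∘ ⋯ ∘ BK_{n-1}`. -/
def promoInv {r : ℕ} (n : ℕ) (T : ℕ → GP r) : ℕ → GP r := BKsegRev 1 (n - 1) T

def evacAux {r : ℕ} : ℕ → (ℕ → GP r) → ℕ → GP r
  | 0, T => T
  | m + 1, T => evacAux m (BKseg 1 (m + 1) T)

/-- Evacuation `E = BK_1 ∘ (BK_2∘BK_1) ∘ ⋯ ∘ (BK_{n-1}∘⋯∘BK_1)`. -/
def evac {r : ℕ} (n : ℕ) (T : ℕ → GP r) : ℕ → GP r := evacAux (n - 1) T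

def devacAux {r : ℕ} (n : ℕ) : ℕ → (ℕ → GP r) → ℕ → GP r
  | 0, T => T
  | m + 1, T => BKseg (n - (m + 1)) (m + 1) (devacAux n m T)

/-- Dual evacuation `E* = (BK_{n-1}∘⋯∘BK_1) ∘ (BK_{n-1}∘⋯∘BK_2) ∘ ⋯ ∘ BK_{n-1}`. -/
def devac {r : ℕ} (n : ℕ) (T : ℕ → GP r) : ℕ → GP r := devacAux n (n - 1) T

/-- `rev(-v)`. -/
def revNeg {r : ℕ} (v : GP r) : GP r := fun i => - v i.rev

/-- Time reversal `τ`. -/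
def tauT {r : ℕ} (n : ℕ) (T : ℕ → GP r) : ℕ → GP r := fun k => T (n - k)

/-- `ϖ`. -/
def varpiT {r : ℕ} (T : ℕ → GP r) : ℕ → GP r := fun k => revNeg (T k)

/-- `ε`. -/
def epsT {r : ℕ} (n : ℕ) (T : ℕ → GP r) : ℕ → GP r := fun k => revNeg (T (n - k))

/-- Sign of the `j`-th step of `T` (paper indexing: step `j` goes from `λ^{j-1}` to `λ^j`). -/
def sgnStep {r : ℕ} (T : ℕ → GP r) (j : ℕ) : ℤ :=
  if T j = T (j - 1) then 0 else if T (j - 1) ≤ T j then 1 else -1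

/-- The switch involution `toggle_j` (paper indexing, `1 ≤ j ≤ n`). -/
def toggleT {r : ℕ} (j : ℕ) (T : ℕ → GP r) : ℕ → GP r :=
  fun m => if m < j then T m else fun i => T m i - sgnStep T j

/-- Number of boxes added/removed in the step from `T j` to `T (j+1)`. -/
def stepSize {r : ℕ} (T : ℕ → GP r) (j : ℕ) : ℕ :=
  (Finset.univ.filter fun i : Fin r => T (j + 1) i ≠ T j i).card

/-- Cumulative step sizes: position of `T j` inside the oscillization. -/
def cum {r : ℕ} (T : ℕ → GP r) (j : ℕ) : ℕ := ∑ j' ∈ Finset.range j, stepSize T j'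

/-- The `j`-th intermediate shape of the oscillization of the skew-column step `μ → λ`:
boxes are added smallest-row-first and removed largest-row-first. -/
def oscStep {r : ℕ} (μ lam : GP r) (j : ℕ) : GP r := fun i =>
  let S := Finset.univ.filter fun i' : Fin r => lam i' ≠ μ i'
  if i ∈ S ∧ (if μ i < lam i then (S.filter fun i' => i' ≤ i).card ≤ j
              else (S.filter fun i' => i ≤ i').card ≤ j)
  then lam i else μ i

/-- Largest index `j ≤ n` with `cum T j ≤ k`. -/
def stdIdx {r : ℕ} (n : ℕ) (T : ℕ → GP r) (k : ℕ) : ℕ :=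
  ((Finset.range (n + 1)).filter fun j => cum T j ≤ k).sup id

/-- The oscillization `std(T)` of a length-`n` tableau, a tableau of length `t = Σ|c_j|`. -/
def stdT {r : ℕ} (n : ℕ) (T : ℕ → GP r) : ℕ → GP r := fun k =>
  if stdIdx n T k = n then T n
  else oscStep (T (stdIdx n T k)) (T (stdIdx n T k + 1)) (k - cum T (stdIdx n T k))

/-- Rows of the promotion–evacuation growth diagram: `PE t S u` is `P^u(S)`
for a length-`t` (oscillating) tableau `S`. -/
def PE {r : ℕ} (t : ℕ) (S : ℕ → GP r) (u : ℕ) : ℕ → GP r := (promo t)^[u] S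

/-- `i ∈ {1,…,r-1}` is recorded at cell `(u,v)` of the growth diagram of `S`
(rows 1-indexed; `λ^{u,v} = P^u(S)(v-u)`). -/
def recorded (r t : ℕ) (S : ℕ → GP r) (i u v : ℕ) : Prop :=
  ∃ a b : Fin r,
    (PE t S (u - 1) (v - u) = PE t S u (v - u - 1) + eV a ∧
     PE t S (u - 1) (v - u + 1) = PE t S u (v - u) + eV b ∧
     (a : ℕ) < i ∧ i ≤ (b : ℕ))
    ∨
    (PE t S u (v - u - 1) = PE t S (u - 1) (v - u) + eV a ∧
     PE t S u (v - u) = PE t S (u - 1) (v - u + 1) + eV b ∧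
     (b : ℕ) < i ∧ i ≤ (a : ℕ))

/-- `i ∈ PM(T)_{u,v}` for an off-diagonal entry of the promotion matrix of `T`
(`u, v ∈ {1,…,t}`, `1 ≤ i ≤ r-1`), using the oscillization `std(T)`. -/
def PMmem (r n t : ℕ) (T : ℕ → GP r) (i u v : ℕ) : Prop :=
  1 ≤ u ∧ u ≤ t ∧ 1 ≤ v ∧ v ≤ t ∧ u ≠ v ∧ 1 ≤ i ∧ i ≤ r - 1 ∧
    recorded r t (stdT n T) i u (if u < v then v else v + t)

/-- Graph of the partial promotion function `prom_i(T)`: `prom_i(T)(u) = v`.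
By convention `prom_0 = prom_r = id` on `{1,…,t}`. -/
def promRel (r n t : ℕ) (T : ℕ → GP r) (i u v : ℕ) : Prop :=
  if i = 0 ∨ i = r then 1 ≤ u ∧ u ≤ t ∧ u = v else PMmem r n t T i u v

/-- Sum of the first `i` entries (1-indexed prefix sums). -/
def pSum {r : ℕ} (v : GP r) (i : ℕ) : ℤ :=
  ∑ j ∈ Finset.univ.filter (fun j : Fin r => (j : ℕ) < i), v j

/-- The filled oscillized local-rule grid: row index `k` counts down from the top row
(`k = 0` is `std(λ → ν)`), column index `q` goes right; the left column is
`std(κ → λ)` read so that `grid cA κ λ ν k 0 = std(κ→λ)` at position `cA - k`. -/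
def grid {r : ℕ} (cA : ℕ) (κ lam ν : GP r) : ℕ → ℕ → GP r
  | 0, q => oscStep lam ν q
  | k + 1, 0 => oscStep κ lam (cA - (k + 1))
  | k + 1, q + 1 =>
      sortDesc (grid cA κ lam ν k (q + 1) + grid cA κ lam ν (k + 1) q -
        grid cA κ lam ν k q)
  termination_by k q => (k, q)

/-- 1-indexed entry of a vector (0 if out of range). -/
def ent {r : ℕ} (v : GP r) (h : ℕ) : ℤ := if hh : h - 1 < r then v ⟨h - 1, hh⟩ else 0

/-- The chain `j_0 = 1, j_h = ` least `h`-balance point of the lattice word of `T`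
weakly after `j_{h-1}` (in `{1,…,n}`), `none` once undefined. An index `j` is an
`h`-balance point iff `(T j)_h = (T j)_{h+1}` (1-indexed rows). -/
def jChain (r n : ℕ) (T : ℕ → GP r) : ℕ → Option ℕ
  | 0 => some 1
  | h + 1 =>
    match jChain r n T h with
    | none => none
    | some jp =>
      if H : ∃ j, jp ≤ j ∧ j ≤ n ∧ ent (T j) (h + 1) = ent (T j) (h + 2) then
        some (Nat.find H)
      else none

/-- `k`: the largest `h ≤ r-1` such that `j_1, …, j_h` are all defined. -/
def kVal (r n : ℕ) (T : ℕ → GP r) : ℕ :=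
  ((Finset.range r).filter fun h => (jChain r n T h).isSome).sup id

/-- `j_h`, defaulting to `0` when undefined. -/
def jval (r n : ℕ) (T : ℕ → GP r) (h : ℕ) : ℕ := (jChain r n T h).getD 0

/-- `ω_c` for `c ∈ {0,±1,…,±r}`: top-justified column of `c` ones if `c ≥ 0`,
bottom-justified column of `|c|` minus-ones if `c < 0`. -/
def omegaGP (r : ℕ) (c : ℤ) : GP r := fun i =>
  if 0 ≤ c then (if (i : ℕ) < c.natAbs then 1 else 0)
  else (if r - c.natAbs ≤ (i : ℕ) then -1 else 0)

/-- The extremal fluctuating tableau of type `c`: partial sums of the `ω_{c_j}`. -/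
def extremal (r : ℕ) (c : ℕ → ℤ) (k : ℕ) : GP r := ∑ j ∈ Finset.range k, omegaGP r (c j)

/-- Lexicographic order: the first nonzero entry of `β - α` is positive. -/
def ltLex {r : ℕ} (α β : GP r) : Prop := ∃ i : Fin r, (∀ j, j < i → α j = β j) ∧ α i < β i

/-- Cumulative sums of `|c_j|` (block boundaries). -/
def cumC (c : ℕ → ℤ) (j : ℕ) : ℕ := ∑ j' ∈ Finset.range j, (c j').natAbs

/-- Entry `(u,v)` (for `u,v ∈ {1,…,n}`) of the reduced promotion matrix `PMr^i(T)`: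
the number of cells in the block `B_u × B_v` whose promotion-matrix entry contains `i`. -/
def PMr (r n t : ℕ) (T : ℕ → GP r) (c : ℕ → ℤ) (i u v : ℕ) : ℕ :=
  (((Finset.Icc (cumC c (u - 1) + 1) (cumC c u)) ×ˢ
    (Finset.Icc (cumC c (v - 1) + 1) (cumC c v))).filter
      fun p => PMmem r n t T i p.1 p.2).card

/-- The set of `r`-row fluctuating tableaux of length `n`, shape `lam`, type `c`,
in bundled (finitely-indexed) form. -/
def FTset (r n : ℕ) (lam : GP r) (c : Fin n → ℤ) : Set (Fin (n + 1) → GP r) :=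
  {T | (∀ k, Antitone (T k)) ∧ T 0 = 0 ∧ T (Fin.last n) = lam ∧
       ∀ j : Fin n, colStep r (c j) (T j.castSucc) (T j.succ)}


variable {r : ℕ}

lemma pSum_zero (v : GP r) : pSum v 0 = 0 := by simp [pSum]

lemma pSum_sub (v w : GP r) (i : ℕ) : pSum (v - w) i = pSum v i - pSum w i := by
  simp [pSum, Finset.sum_sub_distrib]

lemma pSum_add (v w : GP r) (i : ℕ) : pSum (v + w) i = pSum v i + pSum w i := by
  simp [pSum, Finset.sum_add_distrib]

lemma pSum_total (v : GP r) : pSum v r = ∑ j, v j := by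
  unfold pSum
  congr 1
  apply Finset.filter_true_of_mem
  intro j _
  exact j.isLt

lemma pSum_succ (v : GP r) (j : Fin r) : pSum v ((j : ℕ) + 1) = pSum v (j : ℕ) + v j := by
  unfold pSum
  have h : (Finset.univ.filter fun k : Fin r => (k : ℕ) < (j : ℕ) + 1)
      = insert j (Finset.univ.filter fun k : Fin r => (k : ℕ) < (j : ℕ)) := by
    ext k
    simp only [Finset.mem_filter, Finset.mem_insert, Finset.mem_univ, true_and, Fin.ext_iff]
    omega
  rw [h, Finset.sum_insert (by simp)]
  ring

lemma sortDesc_antitone (v : GP r) : Antitone (sortDesc v) := by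
  intro a b hab
  exact Tuple.monotone_sort v (Fin.rev_le_rev.mpr hab)

lemma sortDesc_total (v : GP r) : ∑ j, sortDesc v j = ∑ j, v j := by
  calc ∑ j, sortDesc v j = ∑ j, v ((Fin.revPerm.trans (Tuple.sort v)) j) := by
        refine Finset.sum_congr rfl fun j _ => ?_
        simp [sortDesc, Function.comp]
    _ = ∑ j, v j := Equiv.sum_comp _ v

lemma filter_lt_eq_image {k : ℕ} (hk : k ≤ r) :
    (Finset.univ.filter fun j : Fin r => (j : ℕ) < k)
      = Finset.univ.image (Fin.castLE hk) := by
  ext j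
  simp only [Finset.mem_filter, Finset.mem_univ, true_and, Finset.mem_image]
  constructor
  · intro hj
    exact ⟨⟨j, hj⟩, rfl⟩
  · rintro ⟨i, rfl⟩
    exact i.isLt

lemma pSum_eq_castLE {k : ℕ} (hk : k ≤ r) (β : GP r) :
    pSum β k = ∑ i : Fin k, β (Fin.castLE hk i) := by
  unfold pSum
  rw [filter_lt_eq_image hk, Finset.sum_image (fun a _ b _ h => Fin.castLE_injective hk h)]

lemma strictMono_fin_le {k : ℕ} {f : Fin k → Fin r} (hf : StrictMono f) :
    ∀ m (hm : m < k), m ≤ (f ⟨m, hm⟩ : ℕ) := by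
  intro m
  induction m with
  | zero => intro _; exact Nat.zero_le _
  | succ n ih =>
    intro hm
    have h1 := ih (by omega)
    have h2 : f ⟨n, by omega⟩ < f ⟨n + 1, hm⟩ := hf (by simp [Fin.lt_def])
    have := Fin.lt_def.mp h2
    omega

lemma sum_subset_le_pSum {β : GP r} (hβ : Antitone β) (S : Finset (Fin r)) :
    ∑ j ∈ S, β j ≤ pSum β S.card := by
  have hk : S.card ≤ r := by simpa using S.card_le_univ
  rw [pSum_eq_castLE hk]
  rw [← Finset.sum_coe_sort S (fun j => β j)]
  rw [← Equiv.sum_comp (S.orderIsoOfFin rfl).toEquiv (fun x : {x // x ∈ S} => β x)]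
  apply Finset.sum_le_sum
  intro i _
  apply hβ
  have h1 : (i : ℕ) ≤ ((S.orderEmbOfFin rfl i : Fin r) : ℕ) := by
    have := strictMono_fin_le (S.orderEmbOfFin rfl).strictMono (i : ℕ) i.isLt
    simpa using this
  have h2 : ((S.orderIsoOfFin rfl i : Fin r) : ℕ) = ((S.orderEmbOfFin rfl i : Fin r) : ℕ) := by
    rw [Finset.coe_orderIsoOfFin_apply]
  have h4 : (((((S.orderIsoOfFin rfl).toEquiv i : {x // x ∈ S}) : Fin r)) : ℕ)
      = (((S.orderIsoOfFin rfl i : {x // x ∈ S}) : Fin r) : ℕ) := rfl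
  simp only [Fin.le_def, Fin.coe_castLE]
  omega

lemma pSum_min (β : GP r) (i : ℕ) : pSum β i = pSum β (min i r) := by
  unfold pSum
  congr 1
  ext j
  have := j.isLt
  simp only [Finset.mem_filter, Finset.mem_univ, true_and]
  omega

lemma pSum_le_sortDesc (v : GP r) (i : ℕ) : pSum v i ≤ pSum (sortDesc v) i := by
  classical
  set e := Fin.revPerm.trans (Tuple.sort v) with he
  set A := Finset.univ.filter fun j : Fin r => (j : ℕ) < i with hA
  have h1 : pSum v i = ∑ j ∈ A.image e.symm, sortDesc v j := by
    rw [Finset.sum_image (fun a _ b _ h => e.symm.injective h)]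
    refine Finset.sum_congr rfl fun j _ => ?_
    simp [sortDesc, he, Function.comp]
  have h2 : (A.image e.symm).card = A.card := Finset.card_image_of_injective _ e.symm.injective
  have h3 := sum_subset_le_pSum (sortDesc_antitone v) (A.image e.symm)
  rw [h2] at h3
  have hAcard : A.card = min i r := by
    rcases le_or_gt i r with h | h
    · rw [hA, filter_lt_eq_image h, Finset.card_image_of_injective _ (Fin.castLE_injective h)]
      simp [Nat.min_eq_left h]
    · have : A = Finset.univ := by
        apply Finset.filter_true_of_mem
        intro j _
        exact lt_trans j.isLt h
      rw [this]
      simp [Nat.min_eq_right (le_of_lt h)]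
  rw [h1]
  refine h3.trans ?_
  rw [hAcard, ← pSum_min]


lemma eval_teleSum (r : ℕ) (m : ℕ → ℤ) (hm0 : m 0 = 0) (hmr : m r = 0) (j : Fin r) :
    (∑ i ∈ Finset.Ico 1 r, m i • (eN r (i + 1) - eN r i)) j = m (j : ℕ) - m ((j : ℕ) + 1) := by
  have happ : (∑ i ∈ Finset.Ico 1 r, m i • (eN r (i + 1) - eN r i)) j
      = ∑ i ∈ Finset.Ico 1 r, m i * ((eN r (i + 1)) j - (eN r i) j) := by
    rw [Finset.sum_apply]
    refine Finset.sum_congr rfl fun i _ => ?_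
    simp
  have h1 : ∀ i ∈ Finset.Ico 1 r, m i * ((eN r (i + 1)) j - (eN r i) j)
      = (if i = (j : ℕ) then m i else 0) - (if i = (j : ℕ) + 1 then m i else 0) := by
    intro i _
    unfold eN
    by_cases hc1 : i = (j : ℕ)
    · subst hc1
      rw [if_pos rfl, if_neg (by omega), if_pos rfl, if_neg (by omega)]
      ring
    · by_cases hc2 : i = (j : ℕ) + 1
      · subst hc2
        rw [if_neg (by omega), if_pos rfl, if_neg (by omega), if_pos rfl]
        ring
      · rw [if_neg (by omega), if_neg (by omega), if_neg hc1, if_neg hc2]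
        ring
  rw [happ, Finset.sum_congr rfl h1, Finset.sum_sub_distrib,
    Finset.sum_ite_eq' (Finset.Ico 1 r) ((j : ℕ)) m,
    Finset.sum_ite_eq' (Finset.Ico 1 r) ((j : ℕ) + 1) m]
  have hjlt := j.isLt
  simp only [Finset.mem_Ico]
  split_ifs with hA hB hB
  · rfl
  · rw [show (j : ℕ) + 1 = r by omega, hmr]
  · rw [show (j : ℕ) = 0 by omega, hm0]
  · rw [show (j : ℕ) = 0 by omega, show (0 : ℕ) + 1 = r by omega, hm0, hmr]


/-- **Proposition.** For a local rule diagram `κ →^c λ →^d ν` with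
`μ = sort(ν + κ - λ)`, there exist unique nonnegative integers `m_1,…,m_{r-1}` with
`ν - μ = (λ - κ) + Σ_{i=1}^{r-1} m_i (e_{i+1} - e_i)`.  Equivalently, each partial sum
`Σ_{j=1}^{i}((λ-κ)_j - (ν-μ)_j)` (for `1 ≤ i ≤ r-1`) is nonnegative, and these
partial sums are the `m_i`. -/
theorem reduced_promotion_entries_characterization
    (r : ℕ) (κ lam ν μ : GP r) (c d : ℤ)
    (hκ : Antitone κ) (hlam : Antitone lam) (hν : Antitone ν)
    (h1 : colStep r c κ lam) (h2 : colStep r d lam ν)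
    (hμ : μ = sortDesc (ν + κ - lam)) :
    (∃! m : ℕ → ℤ,
      (∀ i, ¬(1 ≤ i ∧ i < r) → m i = 0) ∧
      (∀ i, 1 ≤ i → i < r → 0 ≤ m i) ∧
      ν - μ = (lam - κ) + ∑ i ∈ Finset.Ico 1 r, m i • (eN r (i + 1) - eN r i)) ∧
    (∀ i, 1 ≤ i → i < r → 0 ≤ pSum (lam - κ) i - pSum (ν - μ) i) ∧
    ν - μ = (lam - κ) +
      ∑ i ∈ Finset.Ico 1 r,
        (pSum (lam - κ) i - pSum (ν - μ) i) • (eN r (i + 1) - eN r i) := by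
  classical
  have hM0 : pSum (lam - κ) 0 - pSum (ν - μ) 0 = 0 := by
    rw [pSum_zero, pSum_zero]; ring
  have hMr : pSum (lam - κ) r - pSum (ν - μ) r = 0 := by
    have hsum : ∑ j, μ j = ∑ j, (ν + κ - lam) j := by
      rw [hμ]; exact sortDesc_total _
    have h2 : ∑ j, (ν + κ - lam) j = ∑ j, ν j + ∑ j, κ j - ∑ j, lam j := by
      simp [Finset.sum_sub_distrib, Finset.sum_add_distrib]
    rw [pSum_sub, pSum_sub, pSum_total, pSum_total, pSum_total, pSum_total]
    linarith
  have hMnn : ∀ i, 0 ≤ pSum (lam - κ) i - pSum (ν - μ) i := by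
    intro i
    have h := pSum_le_sortDesc (ν + κ - lam) i
    rw [← hμ] at h
    rw [pSum_sub, pSum_add] at h
    rw [pSum_sub, pSum_sub]
    linarith
  have master : ∀ m : ℕ → ℤ, m 0 = 0 → m r = 0 →
      ((ν - μ = (lam - κ) + ∑ i ∈ Finset.Ico 1 r, m i • (eN r (i + 1) - eN r i)) ↔
        ∀ i ≤ r, m i = pSum (lam - κ) i - pSum (ν - μ) i) := by
    intro m hm0 hmr
    constructor
    · intro hE
      have hrec : ∀ j : Fin r, m ((j : ℕ) + 1) = m (j : ℕ) + ((lam - κ) j - (ν - μ) j) := by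
        intro j
        have h := congrFun hE j
        rw [Pi.add_apply, eval_teleSum r m hm0 hmr j] at h
        linarith
      intro i
      induction i with
      | zero => intro _; rw [hm0, hM0]
      | succ k ih =>
        intro hk
        have hklt : k < r := by omega
        have h1 := hrec ⟨k, hklt⟩
        have h2 := pSum_succ (lam - κ) ⟨k, hklt⟩
        have h3 := pSum_succ (ν - μ) ⟨k, hklt⟩
        have h4 := ih (by omega)
        simp only [Fin.val_mk] at h1 h2 h3
        linarith
    · intro hv
      funext j
      have e1 := eval_teleSum r m hm0 hmr j
      have h2 := pSum_succ (lam - κ) j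
      have h3 := pSum_succ (ν - μ) j
      have h4 := hv (j : ℕ) (le_of_lt j.isLt)
      have h5 := hv ((j : ℕ) + 1) j.isLt
      rw [Pi.add_apply, e1]
      linarith
  refine ⟨?_, fun i _ _ => hMnn i, ?_⟩
  · have hm0v : ∀ i, (fun i => if 1 ≤ i ∧ i < r then pSum (lam - κ) i - pSum (ν - μ) i else 0) i
        = if 1 ≤ i ∧ i < r then pSum (lam - κ) i - pSum (ν - μ) i else 0 := fun i => rfl
    refine ⟨fun i => if 1 ≤ i ∧ i < r then pSum (lam - κ) i - pSum (ν - μ) i else 0,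
      ⟨fun i hi => by exact if_neg hi, fun i h1 h2 => ?_, ?_⟩, ?_⟩
    · show 0 ≤ if 1 ≤ i ∧ i < r then pSum (lam - κ) i - pSum (ν - μ) i else 0
      rw [if_pos ⟨h1, h2⟩]; exact hMnn i
    · refine (master _ (by exact if_neg (by omega)) (by exact if_neg (by omega))).mpr
        fun i hi => ?_
      by_cases h : 1 ≤ i ∧ i < r
      · rw [if_pos h]
      · rw [if_neg h]
        rcases (by omega : i = 0 ∨ i = r) with h' | h' <;> rw [h']
        · exact hM0.symm
        · exact hMr.symm
    · intro y hy
      obtain ⟨hy1, hy2, hy3⟩ := hy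
      have hy0 : y 0 = 0 := hy1 0 (by omega)
      have hyr : y r = 0 := hy1 r (by omega)
      have hval := (master y hy0 hyr).mp hy3
      funext i
      by_cases h : 1 ≤ i ∧ i < r
      · rw [if_pos h]; exact hval i (le_of_lt h.2)
      · rw [if_neg h]; exact hy1 i h
  · exact (master (fun i => pSum (lam - κ) i - pSum (ν - μ) i) hM0 hMr).mpr fun i _ => rfl

end FT
end
end

section
/- Let T be an r-row fluctuating tableau of length n and type (c_1,…,c_n) with c_1 = 1, and let w = w_1 ⋯ w_n be its lattice word (so w_1 = {1}). Define j_0 := 1 and, recursively, j_h := the smallest h-balance point of w that is ≥ j_{h−1}, for as long as such an index exists; let k ≥ 0 be the largest index for which j_1, …, j_k are all defined. Then: (1) j_1 ≤ j_2 ≤ ⋯ ≤ j_k; (2) if k < r−1, there is no (k+1)-balance point of w that is ≥ j_k (taking j_0 = 1 when k = 0); (3) if T is rectangular, then k = r−1; (4) the lattice word of the promotion P(T) is w′_2 ⋯ w′_n w′_{n+1}, where w′_{n+1} := {k+1} and, for 2 ≤ m ≤ n, w′_m is obtained from w_m by applying successively, for each h = 1,…,k with j_h = m, the substitution that replaces the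 element h+1 of the current letter by h if the letter contains h+1, and otherwise replaces its element −h by −(h+1). -/
open scoped Classical

noncomputable section

namespace FT

/-! ### Auxiliary lemmas for the proof -/

section Aux

variable {r n : ℕ} {T : ℕ → GP r}

lemma sortDesc_of_antitone {u : GP r} (hu : Antitone u) : sortDesc u = u := by
  have hmono : Monotone (u ∘ ⇑(Fin.revPerm : Equiv.Perm (Fin r))) := by
    intro i j hij
    exact hu (by simpa using Fin.rev_le_rev.mpr hij)
  have h : u ∘ ⇑(Fin.revPerm : Equiv.Perm (Fin r)) = u ∘ ⇑(Tuple.sort u) :=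
    Tuple.comp_sort_eq_comp_iff_monotone.mpr hmono
  funext i
  have := congrFun h.symm i.rev
  simpa [sortDesc, Fin.rev_rev] using this

lemma sortDesc_comp_perm (u : GP r) (σ : Equiv.Perm (Fin r)) :
    sortDesc (u ∘ ⇑σ) = sortDesc u := by
  funext i
  simp only [sortDesc]
  rw [Tuple.comp_perm_comp_sort_eq_comp_sort]

lemma sortDesc_sub_eV {lam : GP r} (hl : Antitone lam) (p q : Fin r) (hpq : p ≤ q)
    (heq : lam p = lam q) (hmax : ∀ i, q < i → lam i < lam q) :
    sortDesc (lam - eV p) = lam - eV q := by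
  have hanti : Antitone (lam - eV q) := by
    intro i j hij
    simp only [Pi.sub_apply, eV]
    by_cases hj : j = q
    · by_cases hi : i = q
      · rw [if_pos hi, if_pos hj, hi, hj]
      · rw [if_pos hj, if_neg hi]
        have h1 : lam j ≤ lam i := hl hij
        omega
    · by_cases hi : i = q
      · rw [if_pos hi, if_neg hj]
        have hqj : q < j := lt_of_le_of_ne (hi ▸ hij) (fun h => hj h.symm)
        have h2 : lam j < lam q := hmax j hqj
        rw [hi]
        omega
      · rw [if_neg hi, if_neg hj]
        have h1 : lam j ≤ lam i := hl hij
        omega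
  have hswap : lam - eV p = (lam - eV q) ∘ ⇑(Equiv.swap p q) := by
    funext i
    simp only [Function.comp_apply, Pi.sub_apply, eV]
    by_cases hip : i = p
    · rw [hip, Equiv.swap_apply_left, if_pos rfl, if_pos rfl, heq]
    · by_cases hiq : i = q
      · rw [hiq, Equiv.swap_apply_right]
        by_cases hpq' : p = q
        · rw [if_pos hpq'.symm, if_pos hpq', hpq']
        · rw [if_neg (fun h => hpq' h.symm), if_neg hpq', heq]
      · rw [Equiv.swap_apply_of_ne_of_ne hip hiq, if_neg hip, if_neg hiq]
  rw [hswap, sortDesc_comp_perm, sortDesc_of_antitone hanti]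

lemma BKseg_apply_out (T : ℕ → GP r) :
    ∀ (M k : ℕ), (k = 0 ∨ M < k) → BKseg 1 M T k = T k
  | 0, k, _ => rfl
  | M + 1, k, hk => by
    have hne : k ≠ 1 + M := by omega
    simp only [BKseg, Function.comp_apply, BK, if_neg hne]
    exact BKseg_apply_out T M k (by omega)

lemma BKseg_stable (T : ℕ → GP r) :
    ∀ (M m : ℕ), m ≤ M → BKseg 1 M T m = BKseg 1 m T m
  | 0, m, hm => by
    have : m = 0 := Nat.le_zero.mp hm
    subst this; rfl
  | M + 1, m, hm => by
    rcases Nat.eq_or_lt_of_le hm with rfl | hlt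
    · rfl
    · have h2 : BKseg 1 (M + 1) T m = BKseg 1 M T m := by
        simp only [BKseg, Function.comp_apply, BK]
        rw [if_neg (by omega : ¬ m = 1 + M)]
      rw [h2]
      exact BKseg_stable T M m (by omega)

lemma BKseg_rec (T : ℕ → GP r) (m : ℕ) (hm : 1 ≤ m) :
    BKseg 1 m T m = sortDesc (T (m + 1) + BKseg 1 (m - 1) T (m - 1) - T m) := by
  obtain ⟨d, rfl⟩ : ∃ d, m = d + 1 := ⟨m - 1, by omega⟩
  simp only [BKseg, Function.comp_apply, BK]
  rw [if_pos (by omega : d + 1 = 1 + d)]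
  rw [show 1 + d - 1 = d from by omega]
  rw [BKseg_apply_out T d (1 + d + 1) (by omega), BKseg_apply_out T d (1 + d) (by omega)]
  rw [show d + 1 - 1 = d from by omega]
  rw [show 1 + d + 1 = d + 1 + 1 from by omega]
  rw [show 1 + d = d + 1 from by omega]

lemma promo_rec (T : ℕ → GP r) (n m : ℕ) (h1 : 1 ≤ m) (h2 : m ≤ n - 1) :
    promo n T m = sortDesc (T (m + 1) + promo n T (m - 1) - T m) := by
  have e1 : promo n T m = BKseg 1 m T m := BKseg_stable T (n - 1) m h2
  have e2 : promo n T (m - 1) = BKseg 1 (m - 1) T (m - 1) :=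
    BKseg_stable T (n - 1) (m - 1) (by omega)
  rw [e1, e2, BKseg_rec T m h1]

lemma ent_eq {v : GP r} {h : ℕ} (hh : h - 1 < r) : ent v h = v ⟨h - 1, hh⟩ := by
  simp only [ent]
  exact dif_pos hh

lemma ent_succ {v : GP r} {a : ℕ} (ha : a < r) : ent v (a + 1) = v ⟨a, ha⟩ := by
  rw [ent_eq (show a + 1 - 1 < r by omega)]
  congr 1

lemma bal_iff {v : GP r} {h : ℕ} (h1 : h < r) (h2 : h + 1 < r) :
    (ent v (h + 1) = ent v (h + 2)) ↔ v ⟨h, h1⟩ = v ⟨h + 1, h2⟩ := by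
  rw [ent_succ h1, show h + 2 = (h + 1) + 1 from rfl, ent_succ h2]

lemma eN_eq_eV {a : ℕ} (ha : a < r) : eN r (a + 1) = eV (⟨a, ha⟩ : Fin r) := by
  funext i
  simp only [eN, eV, Fin.ext_iff]
  exact if_congr (by omega) rfl rfl

lemma jChain_zero : jChain r n T 0 = some 1 := rfl

lemma jChain_succ_none {h : ℕ} (hnone : jChain r n T h = none) :
    jChain r n T (h + 1) = none := by
  simp [jChain, hnone]

lemma jChain_isSome_of_le :
    ∀ h h' : ℕ, h' ≤ h → (jChain r n T h).isSome → (jChain r n T h').isSome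
  | 0, h', hh, hs => by rwa [Nat.le_zero.mp hh]
  | h + 1, h', hh, hs => by
    rcases Nat.eq_or_lt_of_le hh with rfl | hlt
    · exact hs
    · apply jChain_isSome_of_le h h' (by omega)
      by_contra hc
      rw [jChain_succ_none (Option.not_isSome_iff_eq_none.mp hc)] at hs
      simp at hs

lemma jChain_succ_some {h j : ℕ} (hj : jChain r n T (h + 1) = some j) :
    ∃ jp, jChain r n T h = some jp ∧ jp ≤ j ∧ j ≤ n ∧
      ent (T j) (h + 1) = ent (T j) (h + 2) ∧
      ∀ x, jp ≤ x → x ≤ n → ent (T x) (h + 1) = ent (T x) (h + 2) → j ≤ x := by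
  cases hp : jChain r n T h with
  | none => rw [jChain_succ_none hp] at hj; cases hj
  | some jp =>
    refine ⟨jp, rfl, ?_⟩
    simp only [jChain, hp] at hj
    by_cases H : ∃ x, jp ≤ x ∧ x ≤ n ∧ ent (T x) (h + 1) = ent (T x) (h + 2)
    · rw [dif_pos H] at hj
      obtain rfl : Nat.find H = j := Option.some_inj.mp hj
      obtain ⟨hx1, hx2, hx3⟩ := Nat.find_spec H
      exact ⟨hx1, hx2, hx3, fun x h1 h2 h3 => Nat.find_min' H ⟨h1, h2, h3⟩⟩
    · rw [dif_neg H] at hj; cases hj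

lemma jChain_succ_eq_some {h jp : ℕ} (hp : jChain r n T h = some jp)
    (H : ∃ x, jp ≤ x ∧ x ≤ n ∧ ent (T x) (h + 1) = ent (T x) (h + 2)) :
    jChain r n T (h + 1) = some (Nat.find H) := by
  simp only [jChain, hp]
  rw [dif_pos H]

lemma jval_eq {h x : ℕ} (hx : jChain r n T h = some x) : jval r n T h = x := by
  simp [jval, hx]

lemma jval_mono :
    ∀ h h' : ℕ, h' ≤ h → (jChain r n T h).isSome → jval r n T h' ≤ jval r n T h
  | 0, h', hh, _ => by rw [Nat.le_zero.mp hh]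
  | h + 1, h', hh, hs => by
    rcases Nat.eq_or_lt_of_le hh with rfl | hlt
    · exact le_rfl
    · obtain ⟨j, hj⟩ := Option.isSome_iff_exists.mp hs
      obtain ⟨jp, hjp, hle, -⟩ := jChain_succ_some hj
      have ih := jval_mono h h' (by omega) (by rw [hjp]; rfl)
      rw [jval_eq hj]
      rw [jval_eq hjp] at ih
      omega

lemma kVal_le_sub_one : kVal r n T ≤ r - 1 := by
  apply Finset.sup_le
  intro b hb
  simp only [Finset.mem_filter, Finset.mem_range] at hb
  simp only [id]
  omega

lemma le_kVal {h : ℕ} (hhr : h < r) (hs : (jChain r n T h).isSome) :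
    h ≤ kVal r n T :=
  Finset.le_sup (f := id)
    (Finset.mem_filter.mpr ⟨Finset.mem_range.mpr hhr, hs⟩)

lemma kVal_isSome (hr : 1 ≤ r) : (jChain r n T (kVal r n T)).isSome := by
  obtain ⟨b, hb, he⟩ :=
    Finset.exists_mem_eq_sup ((Finset.range r).filter fun h => (jChain r n T h).isSome)
      ⟨0, Finset.mem_filter.mpr ⟨Finset.mem_range.mpr hr, by rw [jChain_zero]; rfl⟩⟩ id
  rw [kVal, he]
  exact (Finset.mem_filter.mp hb).2

lemma telescope (f : ℕ → GP r) (a b : ℕ) (hab : a ≤ b) :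
    ∑ h ∈ Finset.Icc (a + 1) b, (f h - f (h + 1)) = f (a + 1) - f (b + 1) := by
  induction b, hab using Nat.le_induction with
  | base => rw [Finset.Icc_eq_empty (by omega)]; simp
  | succ b hb ih =>
    rw [Finset.sum_Icc_succ_top (by omega : a + 1 ≤ b + 1), ih]
    abel

/-- The key invariant carried along the promotion recursion. -/
def InvP (r n : ℕ) (T : ℕ → GP r) (m a : ℕ) : Prop :=
  a < r ∧ (∃ ja, jChain r n T a = some ja ∧ ja ≤ m) ∧
    (a + 2 ≤ r → ∀ j, jChain r n T (a + 1) = some j → m < j) ∧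
    promo n T (m - 1) = T m - eN r (a + 1)

lemma step_lemma (r n : ℕ) (T : ℕ → GP r) (c : ℕ → ℤ) (hr : 1 ≤ r) (hn : 1 ≤ n)
    (hT : IsFT r n T c) (m a : ℕ) (hm1 : 1 ≤ m) (hmn : m + 1 ≤ n)
    (hInv : InvP r n T m a) :
    ∃ b, a ≤ b ∧ InvP r n T (m + 1) b ∧
      ((Finset.Icc 1 (kVal r n T)).filter fun h => jval r n T h = m + 1) =
        Finset.Icc (a + 1) b ∧
      promo n T m - promo n T (m - 1) =
        (T (m + 1) - T m) + (eN r (a + 1) - eN r (b + 1)) := by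
  obtain ⟨har, ⟨ja, hja, hjam⟩, hguard, hU⟩ := hInv
  have hanti : ∀ k ≤ n, Antitone (T k) := hT.1.1
  have hl : Antitone (T (m + 1)) := hanti (m + 1) hmn
  set lam := T (m + 1) with hlamdef
  set p : Fin r := ⟨a, har⟩ with hpdef
  have hSne : (Finset.univ.filter fun j : Fin r => p ≤ j ∧ lam j = lam p).Nonempty :=
    ⟨p, by simp⟩
  set q := (Finset.univ.filter fun j : Fin r => p ≤ j ∧ lam j = lam p).max' hSne with hqdef
  have hqmem := (Finset.univ.filter fun j : Fin r => p ≤ j ∧ lam j = lam p).max'_mem hSne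
  rw [Finset.mem_filter] at hqmem
  obtain ⟨-, hpq, hlq⟩ := hqmem
  rw [← hqdef] at hpq hlq
  have hmax : ∀ i, q < i → lam i < lam q := by
    intro i hi
    have hpi : p ≤ i := le_trans hpq hi.le
    have hle : lam i ≤ lam q := hl hi.le
    rcases lt_or_eq_of_le hle with h | h
    · exact h
    · exfalso
      have hmem : i ∈ Finset.univ.filter fun j : Fin r => p ≤ j ∧ lam j = lam p :=
        Finset.mem_filter.mpr ⟨Finset.mem_univ i, hpi, h.trans hlq⟩
      exact absurd (Finset.le_max' _ i hmem) (not_le.mpr hi)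
  have hblock : ∀ i : Fin r, p ≤ i → i ≤ q → lam i = lam p := by
    intro i h1 h2
    have hA : lam q ≤ lam i := hl h2
    have hB : lam i ≤ lam p := hl h1
    omega
  set b := (q : ℕ) with hbdef
  have hble : ∀ (x : ℕ) (hx : x < r), a ≤ x → p ≤ (⟨x, hx⟩ : Fin r) := by
    intro x hx h
    rw [hpdef, Fin.mk_le_mk]
    exact h
  have hab : a ≤ b := hpq
  have hbr : b < r := q.isLt
  have hqb : q = (⟨b, hbr⟩ : Fin r) := rfl
  have hqge : ∀ (x : ℕ) (hx : x < r), x ≤ b → (⟨x, hx⟩ : Fin r) ≤ q := by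
    intro x hx h
    rw [hqb, Fin.mk_le_mk]
    exact h
  have hblock' : ∀ (x : ℕ) (hx : x < r), a ≤ x → x ≤ b → lam ⟨x, hx⟩ = lam p :=
    fun x hx h1 h2 => hblock _ (hble x hx h1) (hqge x hx h2)
  -- C1: all levels strictly between a and b (inclusive of b) have j-value m+1
  have C1 : ∀ d, 1 ≤ d → a + d ≤ b → jChain r n T (a + d) = some (m + 1) := by
    intro d
    induction d with
    | zero => omega
    | succ d ih =>
      intro _ hdb
      rcases Nat.eq_zero_or_pos d with rfl | hd
      · -- level a + 1
        have hbal : ent (T (m + 1)) (a + 1) = ent (T (m + 1)) (a + 2) := by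
          rw [bal_iff har (show a + 1 < r by omega)]
          have e1 : lam (⟨a, har⟩ : Fin r) = lam p := rfl
          have e2 : lam (⟨a + 1, by omega⟩ : Fin r) = lam p :=
            hblock' _ _ (by omega) (by omega)
          exact e1.trans e2.symm
        have H : ∃ x, ja ≤ x ∧ x ≤ n ∧ ent (T x) (a + 1) = ent (T x) (a + 2) :=
          ⟨m + 1, by omega, hmn, hbal⟩
        have hsome := jChain_succ_eq_some hja H
        have hfle : Nat.find H ≤ m + 1 := Nat.find_min' H ⟨by omega, hmn, hbal⟩
        have hfgt : m < Nat.find H := hguard (by omega) _ hsome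
        have e0 : a + (0 + 1) = a + 1 := rfl
        rw [e0, hsome]
        congr 1
        omega
      · -- level a + d + 1, d ≥ 1
        have hprev : jChain r n T (a + d) = some (m + 1) := ih hd (by omega)
        have hbal : ent (T (m + 1)) (a + d + 1) = ent (T (m + 1)) (a + d + 2) := by
          rw [bal_iff (show a + d < r by omega) (show a + d + 1 < r by omega)]
          have e1 : lam (⟨a + d, by omega⟩ : Fin r) = lam p :=
            hblock' _ _ (by omega) (by omega)
          have e2 : lam (⟨a + d + 1, by omega⟩ : Fin r) = lam p :=
            hblock' _ _ (by omega) (by omega)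
          exact e1.trans e2.symm
        have H : ∃ x, m + 1 ≤ x ∧ x ≤ n ∧
            ent (T x) (a + d + 1) = ent (T x) (a + d + 2) := ⟨m + 1, le_rfl, hmn, hbal⟩
        have hsome := jChain_succ_eq_some hprev H
        have h1 : Nat.find H ≤ m + 1 := Nat.find_min' H ⟨le_rfl, hmn, hbal⟩
        have h2 : m + 1 ≤ Nat.find H := (Nat.find_spec H).1
        have e0 : a + (d + 1) = a + d + 1 := rfl
        rw [e0, hsome]
        congr 1
        omega
  -- the value of jChain at level b
  have hjb_cases : (a = b ∧ jChain r n T b = some ja) ∨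
      (a < b ∧ jChain r n T b = some (m + 1)) := by
    rcases Nat.eq_or_lt_of_le hab with h | h
    · exact Or.inl ⟨h, h ▸ hja⟩
    · refine Or.inr ⟨h, ?_⟩
      have := C1 (b - a) (by omega) (by omega)
      rwa [show a + (b - a) = b by omega] at this
  have hjbs : ∃ jb, jChain r n T b = some jb ∧ jb ≤ m + 1 := by
    rcases hjb_cases with ⟨_, h⟩ | ⟨_, h⟩
    · exact ⟨ja, h, by omega⟩
    · exact ⟨m + 1, h, le_rfl⟩
  -- C2: the guard at level b for time m+1
  have C2 : b + 2 ≤ r → ∀ j, jChain r n T (b + 1) = some j → m + 1 < j := by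
    intro hb2 j hj
    obtain ⟨jb', hjb', hjb'le, hjn, hbalj, -⟩ := jChain_succ_some hj
    have hb1r : b + 1 < r := by omega
    have hne : j ≠ m + 1 := by
      intro hjm
      rw [hjm] at hbalj
      rw [bal_iff (show b < r by omega) hb1r] at hbalj
      have hgt : q < (⟨b + 1, hb1r⟩ : Fin r) := by
        rw [Fin.lt_def]
        show (q : ℕ) < b + 1
        omega
      have hlt := hmax _ hgt
      have heq2 : lam q = lam (⟨b + 1, hb1r⟩ : Fin r) := by rw [hqb]; exact hbalj
      omega
    rcases hjb_cases with ⟨hab', hcb⟩ | ⟨hab', hcb⟩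
    · have := hguard (by omega) j (by rw [show a + 1 = b + 1 by omega]; exact hj)
      omega
    · rw [hcb] at hjb'
      have : jb' = m + 1 := by
        have := Option.some_inj.mp hjb'; omega
      omega
  -- promo value at m
  have ha_eN : eN r (a + 1) = eV p := eN_eq_eV har
  have hq_eN : eN r (b + 1) = eV q := by rw [eN_eq_eV hbr, hqb]
  have hUm : promo n T m = lam - eV q := by
    rw [promo_rec T n m hm1 (by omega)]
    have e : T (m + 1) + promo n T (m - 1) - T m = lam - eV p := by
      rw [hU, ha_eN]
      funext i
      simp only [Pi.add_apply, Pi.sub_apply, ← hlamdef]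
      ring
    rw [e, sortDesc_sub_eV hl p q hpq hlq.symm hmax]
  refine ⟨b, hab, ⟨hbr, ?_, C2, ?_⟩, ?_, ?_⟩
  · obtain ⟨jb, h1, h2⟩ := hjbs
    exact ⟨jb, h1, h2⟩
  · rw [show m + 1 - 1 = m from rfl, hUm, hq_eN]
  · -- the filter set is Icc (a+1) b
    ext h
    simp only [Finset.mem_filter, Finset.mem_Icc]
    constructor
    · rintro ⟨⟨hh1, hhk⟩, hv⟩
      have hsh : (jChain r n T h).isSome :=
        jChain_isSome_of_le _ _ hhk (kVal_isSome hr)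
      constructor
      · by_contra hc
        have hha : h ≤ a := by omega
        have hmono : jval r n T h ≤ jval r n T a :=
          jval_mono a h hha (by rw [hja]; rfl)
        rw [jval_eq hja] at hmono
        omega
      · by_contra hc
        have hbh : b + 1 ≤ h := by omega
        have hs1 : (jChain r n T (b + 1)).isSome :=
          jChain_isSome_of_le h (b + 1) hbh hsh
        obtain ⟨j, hjs⟩ := Option.isSome_iff_exists.mp hs1
        have hb2 : b + 2 ≤ r := by
          have := kVal_le_sub_one (r := r) (n := n) (T := T)
          omega
        have hgt := C2 hb2 j hjs
        have hmono : jval r n T (b + 1) ≤ jval r n T h := jval_mono h (b + 1) hbh hsh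
        rw [jval_eq hjs] at hmono
        omega
    · rintro ⟨hh1, hh2⟩
      have hsome := C1 (h - a) (by omega) (by omega)
      rw [show a + (h - a) = h by omega] at hsome
      refine ⟨⟨by omega, ?_⟩, jval_eq hsome⟩
      exact le_kVal (by omega) (by rw [hsome]; rfl)
  · rw [hUm, hU, ha_eN, hq_eN]
    abel

end Aux

/-- **Proposition (promotion via balance points).** Let `T` be an `r`-row fluctuating
tableau of length `n` with `c_1 = 1`, lattice word `w`.  With `j_0 = 1`,
`j_h` the least `h`-balance point `≥ j_{h-1}` (for as long as it exists) and `k` the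
largest index for which `j_1,…,j_k` are all defined:
(1) `j_1 ≤ ⋯ ≤ j_k`;
(2) if `k < r-1` there is no `(k+1)`-balance point `≥ j_k`;
(3) if `T` is rectangular then `k = r-1`;
(4) the lattice word of `P(T)` is `w′_2 ⋯ w′_n w′_{n+1}` where `w′_{n+1} = {k+1}` and
`w′_m` is obtained from `w_m` by the substitutions at each `h` with `j_h = m`
(each of which changes the letter's weight by `e_h - e_{h+1}`). -/
theorem promotion_via_balance_points
    (r n : ℕ) (T : ℕ → GP r) (c : ℕ → ℤ)
    (hr : 1 ≤ r) (hn : 1 ≤ n)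
    (hT : IsFT r n T c) (hc1 : c 0 = 1) :
    (∀ h, 1 ≤ h → h ≤ kVal r n T → jval r n T (h - 1) ≤ jval r n T h) ∧
    (kVal r n T < r - 1 →
      ¬∃ j, jval r n T (kVal r n T) ≤ j ∧ j ≤ n ∧
        ent (T j) (kVal r n T + 1) = ent (T j) (kVal r n T + 2)) ∧
    (Rect r n T → kVal r n T = r - 1) ∧
    (∀ m, 1 ≤ m → m ≤ n - 1 →
      promo n T m - promo n T (m - 1) =
        (T (m + 1) - T m) +
          ∑ h ∈ (Finset.Icc 1 (kVal r n T)).filter (fun h => jval r n T h = m + 1),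
            (eN r h - eN r (h + 1))) ∧
    promo n T n - promo n T (n - 1) = eN r (kVal r n T + 1) := by
  have hT0 : T 0 = 0 := hT.2
  -- T 1 is the first standard basis vector
  have hT1 : T 1 = eN r 1 := by
    obtain ⟨S, hcard, hS⟩ := hT.1.2 0 hn
    rw [hc1] at hcard hS
    have hS' : T 1 = indV S := by
      rw [if_pos (by norm_num : (0 : ℤ) ≤ 1)] at hS
      rw [hS, hT0]
      funext i
      simp
    have hcard' : S.card = 1 := by simpa using hcard
    obtain ⟨x, rfl⟩ := Finset.card_eq_one.mp hcard'
    have hx0 : x = (⟨0, by omega⟩ : Fin r) := by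
      by_contra hne
      have h01 : (⟨0, by omega⟩ : Fin r) ≤ x := by
        rw [Fin.le_def]
        exact Nat.zero_le _
      have hmono := hT.1.1 1 hn h01
      rw [hS'] at hmono
      simp only [indV, Finset.mem_singleton] at hmono
      rw [if_pos trivial, if_neg (fun h => hne h.symm)] at hmono
      norm_num at hmono
    rw [hS', hx0]
    funext i
    by_cases h : (i : ℕ) = 0
    · simp [indV, eN, Fin.ext_iff, h]
    · simp [indV, eN, Fin.ext_iff, h]
  have hkSome : (jChain r n T (kVal r n T)).isSome := kVal_isSome hr
  -- base case of the invariant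
  have hbase : InvP r n T 1 0 := by
    refine ⟨hr, ⟨1, jChain_zero, le_rfl⟩, ?_, ?_⟩
    · intro h2 j hj
      obtain ⟨jp, hjp, hle, hjn, hbal, -⟩ := jChain_succ_some hj
      have hjp1 : jp = 1 := by
        rw [jChain_zero] at hjp
        exact (Option.some_inj.mp hjp).symm
      rcases Nat.lt_or_ge 1 j with hgt | hge
      · exact hgt
      · exfalso
        have hj1 : j = 1 := by omega
        rw [hj1] at hbal
        rw [bal_iff (show 0 < r by omega) (show 0 + 1 < r by omega), hT1] at hbal
        simp only [eN] at hbal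
        norm_num at hbal
    · have h0 : promo n T (1 - 1) = promo n T 0 := rfl
      rw [h0, promo, BKseg_apply_out T (n - 1) 0 (Or.inl rfl), hT0, hT1]
      funext i
      simp
  -- the invariant holds at every time 1 ≤ m ≤ n
  have hInvAll : ∀ m, 1 ≤ m → m ≤ n → ∃ a, InvP r n T m a := by
    intro m
    induction m with
    | zero => omega
    | succ m ih =>
      intro _ hmn
      rcases Nat.eq_zero_or_pos m with rfl | hm
      · exact ⟨0, hbase⟩
      · obtain ⟨a, ha⟩ := ih (by omega) (by omega)
        obtain ⟨b, -, hb, -, -⟩ := step_lemma r n T c hr hn hT m a (by omega) hmn ha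
        exact ⟨b, hb⟩
  refine ⟨?_, ?_, ?_, ?_, ?_⟩
  · -- (1) monotonicity of the chain
    intro h h1 hk
    obtain ⟨d, rfl⟩ : ∃ d, h = d + 1 := ⟨h - 1, by omega⟩
    have hs : (jChain r n T (d + 1)).isSome := jChain_isSome_of_le _ _ hk hkSome
    obtain ⟨j, hj⟩ := Option.isSome_iff_exists.mp hs
    obtain ⟨jp, hjp, hle, -⟩ := jChain_succ_some hj
    have e : d + 1 - 1 = d := by omega
    rw [e, jval_eq hjp, jval_eq hj]
    exact hle
  · -- (2) no further balance point
    intro hlt hcon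
    obtain ⟨j, h1, h2, h3⟩ := hcon
    obtain ⟨jp, hjp⟩ := Option.isSome_iff_exists.mp hkSome
    have hjv : jval r n T (kVal r n T) = jp := jval_eq hjp
    rw [hjv] at h1
    have H : ∃ x, jp ≤ x ∧ x ≤ n ∧
        ent (T x) (kVal r n T + 1) = ent (T x) (kVal r n T + 2) := ⟨j, h1, h2, h3⟩
    have hsome := jChain_succ_eq_some hjp H
    have : kVal r n T + 1 ≤ kVal r n T :=
      le_kVal (by omega) (by rw [hsome]; rfl)
    omega
  · -- (3) rectangular implies full chain
    rintro ⟨mm, hmm⟩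
    have key : ∀ h, h ≤ r - 1 → ∃ j, jChain r n T h = some j ∧ j ≤ n := by
      intro h
      induction h with
      | zero => exact fun _ => ⟨1, jChain_zero, hn⟩
      | succ h ih =>
        intro hh
        obtain ⟨j, hj, hjn⟩ := ih (by omega)
        have hbal : ent (T n) (h + 1) = ent (T n) (h + 2) := by
          rw [bal_iff (show h < r by omega) (show h + 1 < r by omega), hmm, hmm]
        have H : ∃ x, j ≤ x ∧ x ≤ n ∧ ent (T x) (h + 1) = ent (T x) (h + 2) :=
          ⟨n, hjn, le_rfl, hbal⟩
        exact ⟨Nat.find H, jChain_succ_eq_some hj H, (Nat.find_spec H).2.1⟩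
    obtain ⟨j, hj, -⟩ := key (r - 1) le_rfl
    have h1 : r - 1 ≤ kVal r n T := le_kVal (by omega) (by rw [hj]; rfl)
    have h2 : kVal r n T ≤ r - 1 := kVal_le_sub_one
    omega
  · -- (4) the stepwise difference formula
    intro m h1 h2
    obtain ⟨a, hInv⟩ := hInvAll m h1 (by omega)
    obtain ⟨b, hab, -, hfil, hdiff⟩ :=
      step_lemma r n T c hr hn hT m a h1 (by omega) hInv
    rw [hdiff, hfil, telescope (fun h => eN r h) a b hab]
  · -- (5) the last step adds a box in row k+1
    obtain ⟨a, har, ⟨ja, hja, -⟩, hguard, hU⟩ := hInvAll n hn le_rfl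
    have hUn : promo n T n = T n := by
      rw [promo]
      exact BKseg_apply_out T (n - 1) n (Or.inr (by omega))
    have hak : a = kVal r n T := by
      have hle1 : a ≤ kVal r n T := le_kVal har (by rw [hja]; rfl)
      have hle2 : kVal r n T ≤ a := by
        by_contra hc
        push_neg at hc
        have ha2 : a + 2 ≤ r := by
          have := kVal_le_sub_one (r := r) (n := n) (T := T)
          omega
        have hs : (jChain r n T (a + 1)).isSome :=
          jChain_isSome_of_le (kVal r n T) (a + 1) (by omega) hkSome
        obtain ⟨j, hj⟩ := Option.isSome_iff_exists.mp hs
        have hgt : n < j := hguard ha2 j hj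
        obtain ⟨jp, hjp, hle, hjn, -⟩ := jChain_succ_some hj
        omega
      omega
    rw [hUn, hU, hak]
    abel

end FT
end
end

section
/- Let T be an r-row fluctuating tableau with t := Σ_j |c_j| ≥ 1. Then for all u ≠ v in {1,…,t} and all 1 ≤ i ≤ r−1: i ∈ PM(ϖ(T))_{u,v} if and only if r−i ∈ PM(T)_{u,v}. Consequently, prom_i(ϖ(T)) = prom_{r−i}(T) as partial functions, for all 1 ≤ i ≤ r−1. (Here ϖ(T) is again a fluctuating tableau, of type (−c_1,…,−c_n).) -/
open scoped Classical

noncomputable section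

namespace FT

section Lemmas

variable {r : ℕ}

@[simp] lemma revNeg_apply (v : GP r) (i : Fin r) : revNeg v i = - v i.rev := rfl

lemma revNeg_revNeg (v : GP r) : revNeg (revNeg v) = v := by
  funext i; simp [revNeg, Fin.rev_rev]

lemma revNeg_add (v w : GP r) : revNeg (v + w) = revNeg v + revNeg w := by
  funext i; simp [revNeg]; ring

lemma revNeg_sub (v w : GP r) : revNeg (v - w) = revNeg v - revNeg w := by
  funext i; simp [revNeg]; ring

lemma revNeg_eV (a : Fin r) : revNeg (eV a) = - eV a.rev := by
  funext i
  simp only [revNeg, eV, Pi.neg_apply, Fin.rev_eq_iff]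

lemma sortDesc_revNeg (α : GP r) : sortDesc (revNeg α) = revNeg (sortDesc α) := by
  have key : revNeg α ∘ (((Fin.revPerm.trans (Tuple.sort α)).trans Fin.revPerm : Equiv.Perm (Fin r)))
      = revNeg α ∘ Tuple.sort (revNeg α) := by
    rw [Tuple.comp_sort_eq_comp_iff_monotone]
    intro j j' hjj
    simp only [Function.comp_apply, Equiv.trans_apply, Fin.revPerm_apply, revNeg_apply,
      Fin.rev_rev, neg_le_neg_iff]
    exact Tuple.monotone_sort α (Fin.rev_le_rev.mpr hjj)
  funext i
  have h := congrFun key.symm i.rev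
  simp only [Function.comp_apply, Equiv.trans_apply, Fin.revPerm_apply, revNeg_apply,
    Fin.rev_rev] at h
  simp only [sortDesc, Function.comp_apply, revNeg_apply, h, Fin.rev_rev]

end Lemmas
section Lemmas2

variable {r : ℕ}

lemma varpiT_varpiT (T : ℕ → GP r) : varpiT (varpiT T) = T := by
  funext k; simp [varpiT, revNeg_revNeg]

lemma revNeg_eq_add_eV (X Y : GP r) (a : Fin r) :
    revNeg X = revNeg Y + eV a ↔ Y = X + eV a.rev := by
  constructor
  · intro h
    have h2 := congrArg revNeg h
    rw [revNeg_revNeg, revNeg_add, revNeg_revNeg, revNeg_eV] at h2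
    rw [h2]; abel
  · intro h
    rw [h, revNeg_add, revNeg_eV, Fin.rev_rev]; abel

lemma BK_varpi (i : ℕ) (T : ℕ → GP r) : BK i (varpiT T) = varpiT (BK i T) := by
  funext k
  simp only [BK, varpiT]
  split
  · rw [show revNeg (T (i+1)) + revNeg (T (i-1)) - revNeg (T i)
        = revNeg (T (i+1) + T (i-1) - T i) by rw [revNeg_sub, revNeg_add]]
    exact sortDesc_revNeg _
  · rfl

lemma BKseg_varpi (a m : ℕ) (T : ℕ → GP r) :
    BKseg a m (varpiT T) = varpiT (BKseg a m T) := by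
  induction m with
  | zero => rfl
  | succ m ih => simp only [BKseg, Function.comp_apply, ih, BK_varpi]

lemma promo_varpi (n : ℕ) (T : ℕ → GP r) :
    promo n (varpiT T) = varpiT (promo n T) := BKseg_varpi _ _ _

lemma PE_varpi (t : ℕ) (S : ℕ → GP r) (u : ℕ) :
    PE t (varpiT S) u = varpiT (PE t S u) := by
  induction u with
  | zero => rfl
  | succ u ih =>
    simp only [PE, Function.iterate_succ_apply'] at *
    rw [ih, promo_varpi]

end Lemmas2
section Lemmas3

variable {r : ℕ}

lemma card_filter_rev {P Q : Fin r → Prop} [DecidablePred P] [DecidablePred Q]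
    (h : ∀ i, P i ↔ Q i.rev) :
    (Finset.univ.filter P).card = (Finset.univ.filter Q).card := by
  apply Finset.card_bij' (i := fun (i : Fin r) _ => i.rev) (j := fun (i : Fin r) _ => i.rev)
  all_goals intro a ha
  all_goals simp only [Finset.mem_filter, Finset.mem_univ, true_and, Fin.rev_rev] at *
  all_goals first
    | rfl
    | exact (h a).mp ha
    | exact (h a.rev).mpr (by rwa [Fin.rev_rev])

lemma stepSize_varpi (T : ℕ → GP r) (j : ℕ) :
    stepSize (varpiT T) j = stepSize T j := by
  unfold stepSize
  exact card_filter_rev (fun i => by simp [varpiT, neg_inj, ne_eq])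

lemma cum_varpi (T : ℕ → GP r) (j : ℕ) : cum (varpiT T) j = cum T j := by
  unfold cum; simp [stepSize_varpi]

lemma stdIdx_varpi (n : ℕ) (T : ℕ → GP r) (k : ℕ) :
    stdIdx n (varpiT T) k = stdIdx n T k := by
  unfold stdIdx; simp [cum_varpi]

end Lemmas3
section Lemmas4

variable {r : ℕ}

lemma oscStep_revNeg (μ lam : GP r) (j : ℕ) :
    oscStep (revNeg μ) (revNeg lam) j = revNeg (oscStep μ lam j) := by
  funext i
  simp only [oscStep, revNeg_apply]
  rw [apply_ite Neg.neg]
  congr 1; apply propext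
  simp only [Finset.mem_filter, Finset.mem_univ, true_and, ne_eq, neg_inj, neg_lt_neg_iff]
  have hcard1 : (Finset.filter (fun i' => i' ≤ i)
        (Finset.filter (fun i' : Fin r => ¬lam i'.rev = μ i'.rev) Finset.univ)).card
      = (Finset.filter (fun i' => i.rev ≤ i')
        (Finset.filter (fun i' : Fin r => ¬lam i' = μ i') Finset.univ)).card := by
    rw [Finset.filter_filter, Finset.filter_filter]
    exact card_filter_rev fun x => by simp only [Fin.rev_le_rev]
  have hcard2 : (Finset.filter (fun i' => i ≤ i')
        (Finset.filter (fun i' : Fin r => ¬lam i'.rev = μ i'.rev) Finset.univ)).card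
      = (Finset.filter (fun i' => i' ≤ i.rev)
        (Finset.filter (fun i' : Fin r => ¬lam i' = μ i') Finset.univ)).card := by
    rw [Finset.filter_filter, Finset.filter_filter]
    exact card_filter_rev fun x => by simp only [Fin.rev_le_rev]
  by_cases hne : lam i.rev = μ i.rev
  · simp [hne]
  · simp only [hne, not_false_iff, true_and]
    rcases lt_or_gt_of_ne hne with hlt | hgt
    · rw [if_pos hlt, if_neg (not_lt.mpr hlt.le), hcard1]
    · rw [if_neg (not_lt.mpr hgt.le), if_pos hgt, hcard2]

end Lemmas4
section Lemmas5

variable {r : ℕ}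

lemma stdT_varpi (n : ℕ) (T : ℕ → GP r) : stdT n (varpiT T) = varpiT (stdT n T) := by
  funext k
  show _ = revNeg (stdT n T k)
  simp only [stdT, stdIdx_varpi, cum_varpi, apply_ite revNeg]
  split
  · rfl
  · exact oscStep_revNeg _ _ _

lemma recorded_varpi_mp {t : ℕ} (S : ℕ → GP r) {i : ℕ} (h1 : 1 ≤ i) (h2 : i ≤ r - 1)
    (u v : ℕ) (h : recorded r t (varpiT S) i u v) : recorded r t S (r - i) u v := by
  obtain ⟨a, b, hcase⟩ := h
  have hPE : ∀ w m, PE t (varpiT S) w m = revNeg (PE t S w m) := fun w m => by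
    rw [PE_varpi]; rfl
  have hav := Fin.val_rev a
  have hbv := Fin.val_rev b
  have ha' := a.isLt
  have hb' := b.isLt
  rcases hcase with ⟨e1, e2, ha, hb⟩ | ⟨e1, e2, hb, ha⟩
  · refine ⟨a.rev, b.rev, Or.inr ⟨?_, ?_, ?_, ?_⟩⟩
    · rw [hPE, hPE] at e1; exact (revNeg_eq_add_eV _ _ _).mp e1
    · rw [hPE, hPE] at e2; exact (revNeg_eq_add_eV _ _ _).mp e2
    · omega
    · omega
  · refine ⟨a.rev, b.rev, Or.inl ⟨?_, ?_, ?_, ?_⟩⟩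
    · rw [hPE, hPE] at e1; exact (revNeg_eq_add_eV _ _ _).mp e1
    · rw [hPE, hPE] at e2; exact (revNeg_eq_add_eV _ _ _).mp e2
    · omega
    · omega

lemma recorded_varpi_iff {t : ℕ} (S : ℕ → GP r) {i : ℕ} (h1 : 1 ≤ i) (h2 : i ≤ r - 1)
    (u v : ℕ) : recorded r t (varpiT S) i u v ↔ recorded r t S (r - i) u v := by
  constructor
  · exact recorded_varpi_mp S h1 h2 u v
  · intro h
    have hri : r - (r - i) = i := by omega
    have := recorded_varpi_mp (varpiT S) (i := r - i) (by omega) (by omega) u v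
      (by rwa [varpiT_varpiT])
    rwa [hri] at this

lemma PMmem_varpi (n t : ℕ) (T : ℕ → GP r) {i : ℕ} (h1 : 1 ≤ i) (h2 : i ≤ r - 1)
    (u v : ℕ) : PMmem r n t (varpiT T) i u v ↔ PMmem r n t T (r - i) u v := by
  unfold PMmem
  rw [stdT_varpi]
  constructor
  · rintro ⟨c1, c2, c3, c4, c5, -, -, hrec⟩
    exact ⟨c1, c2, c3, c4, c5, by omega, by omega,
      (recorded_varpi_iff _ h1 h2 _ _).mp hrec⟩
  · rintro ⟨c1, c2, c3, c4, c5, -, -, hrec⟩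
    exact ⟨c1, c2, c3, c4, c5, h1, h2,
      (recorded_varpi_iff _ h1 h2 _ _).mpr hrec⟩

end Lemmas5

/-- **Lemma.** For an `r`-row fluctuating tableau `T` with `t = Σ|c_j| ≥ 1`:
for all `u ≠ v` in `{1,…,t}` and `1 ≤ i ≤ r-1`,
`i ∈ PM(ϖ(T))_{u,v}` iff `r - i ∈ PM(T)_{u,v}`; consequently
`prom_i(ϖ(T)) = prom_{r-i}(T)` as partial functions. -/
theorem promotion_matrix_varpi
    (r n t : ℕ) (T : ℕ → GP r) (c : ℕ → ℤ)
    (hT : IsFT r n T c)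
    (ht : t = ∑ j ∈ Finset.range n, (c j).natAbs) (ht1 : 1 ≤ t) :
    (∀ i, 1 ≤ i → i ≤ r - 1 → ∀ u v, 1 ≤ u → u ≤ t → 1 ≤ v → v ≤ t → u ≠ v →
      (PMmem r n t (varpiT T) i u v ↔ PMmem r n t T (r - i) u v)) ∧
    (∀ i, 1 ≤ i → i ≤ r - 1 → ∀ u v,
      (PMmem r n t (varpiT T) i u v ↔ PMmem r n t T (r - i) u v)) := by
  exact ⟨fun i hi1 hi2 u v _ _ _ _ _ => PMmem_varpi n t T hi1 hi2 u v,
    fun i hi1 hi2 u v => PMmem_varpi n t T hi1 hi2 u v⟩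

end FT
end
end
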